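/- arXiv:2311.06638 — 10 statements merged into one kernel-verified Lean document; each statement's English description precedes it below -/
import Mathlib

section
/- Let G be a homogeneous group with homogeneous norm ‖·‖ and let (W,V) be a couple of complementary homogeneous subgroups. Then the quantity c₀ = inf{ ‖wv‖ : w ∈ W, v ∈ V, ‖w‖ + ‖v‖ = 1 } is strictly positive. -/
/-- A homogeneous group: a group with dilations and a left-invariant,
dilation-homogeneous distance. -/
class HomogeneousGroup (G : Type*) extends Group G, MetricSpace G where
  dil : ℝ → G → G
  dil_id : ∀ x : G, dil 1 x = x
  dil_comp : ∀ {s t : ℝ}, 0 < s → 0 < t → ∀ x : G, dil s (dil t x) = dil (s * t) x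
  dil_mul : ∀ {t : ℝ}, 0 < t → ∀ x y : G, dil t (x * y) = dil t x * dil t y
  continuous_mul' : Continuous fun p : G × G => p.1 * p.2
  continuous_inv' : Continuous fun x : G => x⁻¹
  dist_left_invariant : ∀ z x y : G, dist (z * x) (z * y) = dist x y
  dist_dil : ∀ {t : ℝ}, 0 < t → ∀ x y : G, dist (dil t x) (dil t y) = t * dist x y

namespace HomogeneousGroup

variable {G : Type*} [HomogeneousGroup G]

/-- The homogeneous norm associated with the homogeneous distance. -/
def hnorm (x : G) : ℝ := dist x 1

/-- A homogeneous subgroup: a closed subgroup invariant under dilations. -/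
def IsHomSubgroup (W : Subgroup G) : Prop :=
  IsClosed (W : Set G) ∧ ∀ t : ℝ, 0 < t → ∀ x ∈ W, dil t x ∈ W

/-- `(W,V)` is a couple of complementary homogeneous subgroups:
`W ∩ V = {1}` and `G = W · V`. -/
def AreComplementary (W V : Subgroup G) : Prop :=
  IsHomSubgroup W ∧ IsHomSubgroup V ∧ W ⊓ V = ⊥ ∧
    ∀ x : G, ∃ w ∈ W, ∃ v ∈ V, x = w * v

/-- `πW, πV` are the group projections associated with the factorization
`x = πW x * πV x`, `πW x ∈ W`, `πV x ∈ V`. -/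
def AreProjections (W V : Subgroup G) (πW πV : G → G) : Prop :=
  ∀ x : G, πW x ∈ W ∧ πV x ∈ V ∧ x = πW x * πV x

end HomogeneousGroup

open HomogeneousGroup

/-!
The constraint set `{(w, v) ∈ W × V : ‖w‖ + ‖v‖ = 1}` is closed and bounded, hence compact in a
proper space, and nonempty because dilating a nontrivial factorisation `g = w v` normalises
`‖w‖ + ‖v‖`. So the infimum of the continuous function `(w, v) ↦ ‖w v‖` is attained, and it is
not `0`: `w v = 1` forces `w = v⁻¹ ∈ W ∩ V = {1}`, contradicting `‖w‖ + ‖v‖ = 1`.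
-/

namespace HomogeneousGroup

variable {G : Type*} [HomogeneousGroup G]

theorem dil_one {t : ℝ} (ht : 0 < t) : dil t (1 : G) = 1 := by
  simpa using dil_mul ht (1 : G) 1

theorem hnorm_nonneg (x : G) : 0 ≤ hnorm x := dist_nonneg

theorem hnorm_eq_zero {x : G} : hnorm x = 0 ↔ x = 1 := dist_eq_zero

@[simp]
theorem hnorm_one : hnorm (1 : G) = 0 := dist_self _

theorem continuous_hnorm : Continuous (hnorm : G → ℝ) :=
  continuous_id.dist continuous_const

theorem hnorm_dil {t : ℝ} (ht : 0 < t) (x : G) : hnorm (dil t x) = t * hnorm x := by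
  rw [hnorm, ← dil_one ht, dist_dil ht, hnorm]

def unitPairs (W V : Subgroup G) : Set (G × G) :=
  {p | p.1 ∈ W ∧ p.2 ∈ V ∧ hnorm p.1 + hnorm p.2 = 1}

theorem isClosed_unitPairs {W V : Subgroup G} (hW : IsClosed (W : Set G))
    (hV : IsClosed (V : Set G)) : IsClosed (unitPairs W V) :=
  (hW.preimage continuous_fst).inter <| (hV.preimage continuous_snd).inter <|
    isClosed_eq ((continuous_hnorm.comp continuous_fst).add
      (continuous_hnorm.comp continuous_snd)) continuous_const

theorem unitPairs_subset_closedBall (W V : Subgroup G) :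
    unitPairs W V ⊆ Metric.closedBall 1 1 ×ˢ Metric.closedBall 1 1 := by
  rintro ⟨w, v⟩ ⟨-, -, hsum⟩
  exact ⟨Metric.mem_closedBall.mpr (by linarith [hnorm_nonneg v] : hnorm w ≤ 1),
    Metric.mem_closedBall.mpr (by linarith [hnorm_nonneg w] : hnorm v ≤ 1)⟩

theorem isCompact_unitPairs [ProperSpace G] {W V : Subgroup G} (hW : IsClosed (W : Set G))
    (hV : IsClosed (V : Set G)) : IsCompact (unitPairs W V) :=
  ((isCompact_closedBall _ _).prod (isCompact_closedBall _ _)).of_isClosed_subset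
    (isClosed_unitPairs hW hV) (unitPairs_subset_closedBall W V)

theorem unitPairs_nonempty_of_ne_one {W V : Subgroup G} (hW : IsHomSubgroup W)
    (hV : IsHomSubgroup V) {w v : G} (hw : w ∈ W) (hv : v ∈ V) (hwv : w * v ≠ 1) :
    (unitPairs W V).Nonempty := by
  set c := hnorm w + hnorm v
  have hc : 0 < c := by
    refine lt_of_le_of_ne (add_nonneg (hnorm_nonneg w) (hnorm_nonneg v)) fun hc0 => hwv ?_
    rw [hnorm_eq_zero.mp (by linarith [hnorm_nonneg w, hnorm_nonneg v] : hnorm w = 0),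
      hnorm_eq_zero.mp (by linarith [hnorm_nonneg w, hnorm_nonneg v] : hnorm v = 0), mul_one]
  have hc' : 0 < c⁻¹ := inv_pos.mpr hc
  refine ⟨(dil c⁻¹ w, dil c⁻¹ v), hW.2 _ hc' w hw, hV.2 _ hc' v hv, ?_⟩
  rw [hnorm_dil hc', hnorm_dil hc', ← mul_add, inv_mul_cancel₀ hc.ne']

theorem unitPairs_nonempty [Nontrivial G] {W V : Subgroup G} (h : AreComplementary W V) :
    (unitPairs W V).Nonempty := by
  obtain ⟨g, hg⟩ := exists_ne (1 : G)
  obtain ⟨w, hw, v, hv, rfl⟩ := h.2.2.2 g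
  exact unitPairs_nonempty_of_ne_one h.1 h.2.1 hw hv hg

theorem hnorm_mul_pos_of_mem_unitPairs {W V : Subgroup G} (hWV : W ⊓ V = ⊥) {p : G × G}
    (hp : p ∈ unitPairs W V) : 0 < hnorm (p.1 * p.2) := by
  obtain ⟨hw, hv, hsum⟩ := hp
  refine lt_of_le_of_ne (hnorm_nonneg _) fun h0 => ?_
  have hinv : p.1 = p.2⁻¹ := eq_inv_of_mul_eq_one_left (hnorm_eq_zero.mp h0.symm)
  have hw1 : p.1 = 1 := by
    rw [← Subgroup.mem_bot, ← hWV]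
    exact ⟨hw, hinv ▸ V.inv_mem hv⟩
  have hv1 : p.2 = 1 := inv_eq_one.mp (hinv ▸ hw1)
  simp [hw1, hv1] at hsum

theorem setOf_hnorm_mul_eq_image (W V : Subgroup G) :
    {r : ℝ | ∃ w ∈ W, ∃ v ∈ V, hnorm w + hnorm v = 1 ∧ r = hnorm (w * v)} =
      (fun p : G × G => hnorm (p.1 * p.2)) '' unitPairs W V := by
  ext r
  constructor
  · rintro ⟨w, hw, v, hv, hsum, rfl⟩
    exact ⟨(w, v), ⟨hw, hv, hsum⟩, rfl⟩
  · rintro ⟨⟨w, v⟩, ⟨hw, hv, hsum⟩, rfl⟩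
    exact ⟨w, hw, v, hv, hsum, rfl⟩

end HomogeneousGroup

open HomogeneousGroup

/-- For a couple `(W,V)` of complementary homogeneous subgroups of a
homogeneous group `G`, the quantity
`c₀ = inf { ‖w v‖ : w ∈ W, v ∈ V, ‖w‖ + ‖v‖ = 1 }` is strictly positive. -/
theorem statement0 {G : Type*} [HomogeneousGroup G] [Nontrivial G] [ProperSpace G]
    (W V : Subgroup G) (h : AreComplementary W V) :
    0 < sInf {r : ℝ | ∃ w ∈ W, ∃ v ∈ V, hnorm w + hnorm v = 1 ∧ r = hnorm (w * v)} := by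
  have hcont : Continuous fun p : G × G => hnorm (p.1 * p.2) :=
    continuous_hnorm.comp continuous_mul'
  rw [setOf_hnorm_mul_eq_image]
  obtain ⟨p, hp, hmin⟩ := ((isCompact_unitPairs h.1.1 h.2.1.1).image hcont).sInf_mem
    ((unitPairs_nonempty h).image _)
  rw [← hmin]
  exact hnorm_mul_pos_of_mem_unitPairs h.2.2.1 hp
end

section
/- Let (W,V) be complementary homogeneous subgroups of a homogeneous group G with constant c₀ as above, and let π_V : G → V denote the group projection given by the unique factorization x = π_W(x)·π_V(x). Then for every x ∈ G one has c₀ ‖π_V(x)‖ ≤ dist(x, W) ≤ ‖π_V(x)‖, where dist(x,W) = inf{ d(x,y) : y ∈ W }. -/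
open HomogeneousGroup

namespace HomogeneousGroup

variable {G : Type*} [HomogeneousGroup G]

theorem dist_eq_hnorm_inv_mul (x y : G) : dist x y = hnorm (y⁻¹ * x) := by
  rw [hnorm, ← dist_left_invariant y⁻¹ x y, inv_mul_cancel]

/-- The constant `c₀` of the pair `(W, V)`. -/
noncomputable def complementaryConstant (W V : Subgroup G) : ℝ :=
  sInf {r : ℝ | ∃ w ∈ W, ∃ v ∈ V, hnorm w + hnorm v = 1 ∧ r = hnorm (w * v)}

variable {W V : Subgroup G}

theorem complementaryConstant_nonneg : 0 ≤ complementaryConstant W V :=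
  Real.sInf_nonneg fun _ ⟨_, _, _, _, _, hr⟩ => hr ▸ hnorm_nonneg _

theorem complementaryConstant_le_hnorm_mul {w v : G} (hw : w ∈ W) (hv : v ∈ V)
    (hwv : hnorm w + hnorm v = 1) : complementaryConstant W V ≤ hnorm (w * v) :=
  csInf_le ⟨0, fun _ ⟨_, _, _, _, _, hr⟩ => hr ▸ hnorm_nonneg _⟩ ⟨w, hw, v, hv, hwv, rfl⟩

theorem complementaryConstant_mul_le_hnorm_mul
    (hW : ∀ t : ℝ, 0 < t → ∀ x ∈ W, dil t x ∈ W) (hV : ∀ t : ℝ, 0 < t → ∀ x ∈ V, dil t x ∈ V)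
    {w v : G} (hw : w ∈ W) (hv : v ∈ V) :
    complementaryConstant W V * (hnorm w + hnorm v) ≤ hnorm (w * v) := by
  rcases (add_nonneg (hnorm_nonneg w) (hnorm_nonneg v)).eq_or_lt with hs | hs
  · rw [← hs, mul_zero]
    exact hnorm_nonneg _
  set s := hnorm w + hnorm v
  have ht : 0 < s⁻¹ := inv_pos.mpr hs
  have hunit : hnorm (dil s⁻¹ w) + hnorm (dil s⁻¹ v) = 1 := by
    rw [hnorm_dil ht, hnorm_dil ht, ← mul_add, inv_mul_cancel₀ hs.ne']
  have hle := complementaryConstant_le_hnorm_mul (hW _ ht w hw) (hV _ ht v hv) hunit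
  rwa [← dil_mul ht, hnorm_dil ht, le_inv_mul_iff₀' hs] at hle

theorem complementaryConstant_mul_hnorm_le_infDist
    (hW : ∀ t : ℝ, 0 < t → ∀ x ∈ W, dil t x ∈ W) (hV : ∀ t : ℝ, 0 < t → ∀ x ∈ V, dil t x ∈ V)
    {w v : G} (hw : w ∈ W) (hv : v ∈ V) :
    complementaryConstant W V * hnorm v ≤ Metric.infDist (w * v) (W : Set G) := by
  refine (Metric.le_infDist ⟨1, W.one_mem⟩).mpr fun y hy => ?_
  have hyw : y⁻¹ * w ∈ W := W.mul_mem (W.inv_mem hy) hw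
  calc complementaryConstant W V * hnorm v
      ≤ complementaryConstant W V * (hnorm (y⁻¹ * w) + hnorm v) :=
        mul_le_mul_of_nonneg_left (le_add_of_nonneg_left (hnorm_nonneg _))
          complementaryConstant_nonneg
    _ ≤ hnorm (y⁻¹ * w * v) := complementaryConstant_mul_le_hnorm_mul hW hV hyw hv
    _ = dist (w * v) y := by rw [dist_eq_hnorm_inv_mul, mul_assoc]

theorem infDist_le_hnorm {w : G} (hw : w ∈ W) (v : G) :
    Metric.infDist (w * v) (W : Set G) ≤ hnorm v := by
  calc Metric.infDist (w * v) (W : Set G) ≤ dist (w * v) w := Metric.infDist_le_dist_of_mem hw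
    _ = hnorm v := by rw [dist_eq_hnorm_inv_mul, inv_mul_cancel_left]

end HomogeneousGroup

/-- With `(W,V)` complementary homogeneous subgroups, `c₀` as above and
`π_V` the group projection on `V`, for every `x ∈ G` one has
`c₀ ‖π_V x‖ ≤ dist(x, W) ≤ ‖π_V x‖`. -/
theorem statement2 {G : Type*} [HomogeneousGroup G]
    (W V : Subgroup G) (h : AreComplementary W V)
    (πW πV : G → G) (hproj : AreProjections W V πW πV) (c₀ : ℝ)
    (hc₀ : c₀ = sInf {r : ℝ | ∃ w ∈ W, ∃ v ∈ V, hnorm w + hnorm v = 1 ∧ r = hnorm (w * v)}) :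
    ∀ x : G,
      c₀ * hnorm (πV x) ≤ Metric.infDist x (W : Set G) ∧
      Metric.infDist x (W : Set G) ≤ hnorm (πV x) := by
  obtain ⟨⟨-, hW⟩, ⟨-, hV⟩, -, -⟩ := h
  intro x
  obtain ⟨hw, hv, hx⟩ := hproj x
  have hlower := complementaryConstant_mul_hnorm_le_infDist hW hV hw hv
  have hupper := infDist_le_hnorm hw (πV x)
  rw [← hx] at hlower hupper
  exact ⟨hc₀ ▸ hlower, hupper⟩
end

section
/- Let (W,V) be complementary homogeneous subgroups of a homogeneous group G, A ⊂ W, φ : A → V with graph map Φ(w) = w·φ(w), and let x ∈ G. Define A_x = σ_x(A) and the translated function φ_x : A_x → V by φ_x(η) = (π_V(x⁻¹η))⁻¹ · φ(π_W(x⁻¹η)). Then x · graph(φ) = graph(φ_x), i.e. x·{wφ(w) : w ∈ A} = {η·φ_x(η) : η ∈ A_x}. -/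
/-! Everything follows from uniqueness of the factorization `G = W · V`. For `w ∈ W` and
`η = σ_x(w) = π_W(xw)` we have `x⁻¹η = w · π_V(xw)⁻¹`, so `π_W(x⁻¹η) = w` and
`π_V(x⁻¹η) = π_V(xw)⁻¹`; hence `η · φ_x(η) = π_W(xw) · π_V(xw) · φ(w) = x · w · φ(w)`. -/

namespace HomogeneousGroup

variable {G : Type*} [HomogeneousGroup G] {W V : Subgroup G} {πW πV : G → G}

theorem AreComplementary.disjoint (h : AreComplementary W V) : Disjoint W V :=
  disjoint_iff.2 h.2.2.1

theorem AreProjections.apply_mul_eq (hproj : AreProjections W V πW πV) (hWV : Disjoint W V)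
    {w v : G} (hw : w ∈ W) (hv : v ∈ V) : πW (w * v) = w ∧ πV (w * v) = v := by
  obtain ⟨hπW, hπV, hfactor⟩ := hproj (w * v)
  have := Subgroup.mul_injective_of_disjoint hWV
    (a₁ := (⟨πW (w * v), hπW⟩, ⟨πV (w * v), hπV⟩)) (a₂ := (⟨w, hw⟩, ⟨v, hv⟩)) hfactor.symm
  simpa [Prod.ext_iff] using this

theorem AreProjections.apply_inv_mul_projW (hproj : AreProjections W V πW πV)
    (hWV : Disjoint W V) (x : G) {w : G} (hw : w ∈ W) :
    πW (x⁻¹ * πW (x * w)) = w ∧ πV (x⁻¹ * πW (x * w)) = (πV (x * w))⁻¹ := by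
  obtain ⟨-, hπV, hfactor⟩ := hproj (x * w)
  have hη : x⁻¹ * πW (x * w) = w * (πV (x * w))⁻¹ := by
    rw [eq_mul_inv_of_mul_eq hfactor.symm]
    group
  rw [hη]
  exact hproj.apply_mul_eq hWV hw (V.inv_mem hπV)

theorem AreProjections.mul_graph_point_eq (hproj : AreProjections W V πW πV)
    (hWV : Disjoint W V) (φ : G → G) (x : G) {w : G} (hw : w ∈ W) :
    x * (w * φ w) = πW (x * w) *
      ((πV (x⁻¹ * πW (x * w)))⁻¹ * φ (πW (x⁻¹ * πW (x * w)))) := by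
  obtain ⟨hπW, hπV⟩ := hproj.apply_inv_mul_projW hWV x hw
  rw [hπW, hπV, inv_inv, ← mul_assoc, ← mul_assoc, ← (hproj (x * w)).2.2]

end HomogeneousGroup

open HomogeneousGroup

theorem statement4_general {G : Type*} [HomogeneousGroup G]
    (W V : Subgroup G) (h : AreComplementary W V)
    (πW πV : G → G) (hproj : AreProjections W V πW πV)
    (A : Set G) (hA : A ⊆ (W : Set G))
    (φ : G → G) (x : G) :
    (fun g => x * g) '' {g : G | ∃ w ∈ A, g = w * φ w} =
      {g : G | ∃ η ∈ (fun η => πW (x * η)) '' A,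
        g = η * ((πV (x⁻¹ * η))⁻¹ * φ (πW (x⁻¹ * η)))} := by
  have hgraph (w : G) (hw : w ∈ A) := hproj.mul_graph_point_eq h.disjoint φ x (hA hw)
  ext g
  simp only [Set.mem_image, Set.mem_ofPred_eq]
  constructor <;> rintro ⟨_, ⟨w, hw, rfl⟩, rfl⟩ <;> exact ⟨_, ⟨w, hw, rfl⟩, hgraph w hw⟩

/-- Translation of intrinsic graphs: for `φ : A → V`, `A ⊆ W`, and
`x ∈ G`, one has `x · graph(φ) = graph(φ_x)`, where `A_x = σ_x(A)` and
`φ_x(η) = (π_V(x⁻¹η))⁻¹ · φ(π_W(x⁻¹η))`. -/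
theorem statement4 {G : Type*} [HomogeneousGroup G]
    (W V : Subgroup G) (h : AreComplementary W V)
    (πW πV : G → G) (hproj : AreProjections W V πW πV)
    (A : Set G) (hA : A ⊆ (W : Set G))
    (φ : G → G) (hφ : ∀ w ∈ A, φ w ∈ V) (x : G) :
    (fun g => x * g) '' {g : G | ∃ w ∈ A, g = w * φ w} =
      {g : G | ∃ η ∈ (fun η => πW (x * η)) '' A,
        g = η * ((πV (x⁻¹ * η))⁻¹ * φ (πW (x⁻¹ * η)))} :=
  statement4_general W V h πW πV hproj A hA φ x
end

section
/- Let (W,V) be complementary homogeneous subgroups of a homogeneous group G, with W a normal subgroup. Then φ : A → V (A ⊂ W) is intrinsic L-Lipschitz if and only if ‖φ(w')⁻¹ φ(w)‖ ≤ L ‖φ(w')⁻¹ w'⁻¹ w φ(w')‖ for every w, w' ∈ A. -/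
open HomogeneousGroup

/-! Since `W` is normal, `Φ(w')⁻¹ Φ(w) = (φ(w')⁻¹ w'⁻¹ w φ(w')) · (φ(w')⁻¹ φ(w))` with the first
factor in `W` and the second in `V`; as `W ∩ V = {1}` this factorization is unique, so the two
conditions compare the same pair of elements. -/

theorem Subgroup.eq_and_eq_of_mul_eq_mul_of_inf_eq_bot {G : Type*} [Group G]
    {W V : Subgroup G} (hWV : W ⊓ V = ⊥) {a a' b b' : G}
    (ha : a ∈ W) (ha' : a' ∈ W) (hb : b ∈ V) (hb' : b' ∈ V) (hab : a * b = a' * b') :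
    a = a' ∧ b = b' := by
  have hcross : a'⁻¹ * a = b' * b⁻¹ := by
    rw [inv_mul_eq_iff_eq_mul, ← mul_assoc, ← hab, mul_inv_cancel_right]
  have hmem : a'⁻¹ * a ∈ W ⊓ V :=
    ⟨W.mul_mem (W.inv_mem ha') ha, hcross ▸ V.mul_mem hb' (V.inv_mem hb)⟩
  rw [hWV, Subgroup.mem_bot, inv_mul_eq_one] at hmem
  subst hmem
  exact ⟨rfl, mul_left_cancel hab⟩

namespace HomogeneousGroup.AreProjections

variable {G : Type*} [HomogeneousGroup G] {W V : Subgroup G} {πW πV : G → G}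

theorem eq_of_mul_eq (hπ : AreProjections W V πW πV) (hWV : W ⊓ V = ⊥) {a b : G}
    (ha : a ∈ W) (hb : b ∈ V) : πW (a * b) = a ∧ πV (a * b) = b := by
  obtain ⟨hπW, hπV, hdecomp⟩ := hπ (a * b)
  exact Subgroup.eq_and_eq_of_mul_eq_mul_of_inf_eq_bot hWV hπW ha hπV hb hdecomp.symm

theorem proj_inv_mul_of_normal (hπ : AreProjections W V πW πV) (hWV : W ⊓ V = ⊥)
    (hWn : W.Normal) {w w' v v' : G} (hw : w ∈ W) (hw' : w' ∈ W) (hv : v ∈ V)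
    (hv' : v' ∈ V) :
    πW ((w' * v')⁻¹ * (w * v)) = v'⁻¹ * w'⁻¹ * w * v' ∧
      πV ((w' * v')⁻¹ * (w * v)) = v'⁻¹ * v := by
  have hconj : v'⁻¹ * w'⁻¹ * w * v' ∈ W := by
    simpa [mul_assoc] using
      hWn.conj_mem (w'⁻¹ * w) (W.mul_mem (W.inv_mem hw') hw) v'⁻¹
  have hfactor : (w' * v')⁻¹ * (w * v) = (v'⁻¹ * w'⁻¹ * w * v') * (v'⁻¹ * v) := by group
  rw [hfactor]
  exact hπ.eq_of_mul_eq hWV hconj (V.mul_mem (V.inv_mem hv') hv)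

end HomogeneousGroup.AreProjections

theorem statement5_general {G : Type*} [HomogeneousGroup G]
    (W V : Subgroup G) (h : AreComplementary W V) (hWn : W.Normal)
    (πW πV : G → G) (hproj : AreProjections W V πW πV)
    (A : Set G) (hA : A ⊆ (W : Set G))
    (φ : G → G) (hφ : ∀ w ∈ A, φ w ∈ V) (L : ℝ) :
    (∀ w ∈ A, ∀ w' ∈ A,
        hnorm (πV ((w' * φ w')⁻¹ * (w * φ w))) ≤ L * hnorm (πW ((w' * φ w')⁻¹ * (w * φ w))))
      ↔
    (∀ w ∈ A, ∀ w' ∈ A,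
        hnorm ((φ w')⁻¹ * φ w) ≤ L * hnorm ((φ w')⁻¹ * w'⁻¹ * w * φ w')) := by
  refine forall₂_congr fun w hw => forall₂_congr fun w' hw' => ?_
  obtain ⟨hπW, hπV⟩ :=
    hproj.proj_inv_mul_of_normal h.2.2.1 hWn (hA hw) (hA hw') (hφ w hw) (hφ w' hw')
  rw [hπW, hπV]

/-- If `W` is normal, then `φ : A → V` is intrinsic `L`-Lipschitz
(i.e. `‖π_V(Φ(w')⁻¹Φ(w))‖ ≤ L ‖π_W(Φ(w')⁻¹Φ(w))‖` for all `w, w' ∈ A`, where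
`Φ(w) = w φ(w)`) if and only if
`‖φ(w')⁻¹ φ(w)‖ ≤ L ‖φ(w')⁻¹ w'⁻¹ w φ(w')‖` for every `w, w' ∈ A`. -/
theorem statement5 {G : Type*} [HomogeneousGroup G]
    (W V : Subgroup G) (h : AreComplementary W V) (hWn : W.Normal)
    (πW πV : G → G) (hproj : AreProjections W V πW πV)
    (A : Set G) (hA : A ⊆ (W : Set G))
    (φ : G → G) (hφ : ∀ w ∈ A, φ w ∈ V) (L : ℝ) (hL : 0 ≤ L) :
    (∀ w ∈ A, ∀ w' ∈ A,
        hnorm (πV ((w' * φ w')⁻¹ * (w * φ w))) ≤ L * hnorm (πW ((w' * φ w')⁻¹ * (w * φ w))))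
      ↔
    (∀ w ∈ A, ∀ w' ∈ A,
        hnorm ((φ w')⁻¹ * φ w) ≤ L * hnorm ((φ w')⁻¹ * w'⁻¹ * w * φ w')) :=
  statement5_general W V h hWn πW πV hproj A hA φ hφ L
end

section
/- Let (W,V) be complementary homogeneous subgroups of a homogeneous group G, A ⊂ W, and φ : A → V with graph map Φ. Then φ is intrinsic L-Lipschitz if and only if for every x ∈ graph(φ) and every w ∈ A_{x⁻¹} one has ‖φ_{x⁻¹}(w)‖ ≤ L‖w‖, where φ_{x⁻¹} denotes the translated function of φ by x⁻¹. -/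
open HomogeneousGroup

/-!
Since `W ∩ V = {1}`, the factorization `g = πW g * πV g` is unique. Consequently, for
`x ∈ G` and `a ∈ W`, the point `η = πW (x⁻¹ * a)` of `A_{x⁻¹}` satisfies `x * η = a * (πV (x⁻¹ * a))⁻¹`,
so `φ_{x⁻¹}(η) = πV (x⁻¹ * a) * φ a = πV (x⁻¹ * (a * φ a))` and `η = πW (x⁻¹ * (a * φ a))`.
Taking `x = w' * φ w'`, the inequality `‖φ_{x⁻¹}(η)‖ ≤ L ‖η‖` is then literally the intrinsic
Lipschitz inequality for the pair `(a, w')`.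
-/

namespace HomogeneousGroup.AreProjections

variable {G : Type*} [HomogeneousGroup G] {W V : Subgroup G} {πW πV : G → G}

theorem eq_of_eq_mul (hproj : AreProjections W V πW πV) (hWV : W ⊓ V = ⊥)
    {g w v : G} (hw : w ∈ W) (hv : v ∈ V) (hg : g = w * v) : πW g = w ∧ πV g = v := by
  obtain ⟨hπW, hπV, hfac⟩ := hproj g
  have hinj := Subgroup.mul_injective_of_disjoint (disjoint_iff.mpr hWV)
    (a₁ := (⟨πW g, hπW⟩, ⟨πV g, hπV⟩)) (a₂ := (⟨w, hw⟩, ⟨v, hv⟩)) (hfac.symm.trans hg)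
  simpa only [Prod.mk.injEq, Subtype.mk.injEq] using hinj

theorem proj_mul_of_mem_right (hproj : AreProjections W V πW πV) (hWV : W ⊓ V = ⊥)
    (g : G) {v : G} (hv : v ∈ V) : πW (g * v) = πW g ∧ πV (g * v) = πV g * v := by
  obtain ⟨hπW, hπV, hfac⟩ := hproj g
  refine hproj.eq_of_eq_mul hWV hπW (V.mul_mem hπV hv) ?_
  rw [← mul_assoc, ← hfac]

theorem proj_mul_projW_inv_mul (hproj : AreProjections W V πW πV) (hWV : W ⊓ V = ⊥)
    (x : G) {a : G} (ha : a ∈ W) :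
    πW (x * πW (x⁻¹ * a)) = a ∧ πV (x * πW (x⁻¹ * a)) = (πV (x⁻¹ * a))⁻¹ := by
  obtain ⟨-, hπV, hfac⟩ := hproj (x⁻¹ * a)
  refine hproj.eq_of_eq_mul hWV ha (V.inv_mem hπV) ?_
  rw [eq_mul_inv_iff_mul_eq, mul_assoc, ← hfac, mul_inv_cancel_left]

theorem translate_projW_inv_mul (hproj : AreProjections W V πW πV) (hWV : W ⊓ V = ⊥)
    (φ : G → G) (x : G) {a : G} (ha : a ∈ W) (hφa : φ a ∈ V) :
    (πV (x * πW (x⁻¹ * a)))⁻¹ * φ (πW (x * πW (x⁻¹ * a))) = πV (x⁻¹ * (a * φ a)) := by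
  obtain ⟨hW, hV⟩ := hproj.proj_mul_projW_inv_mul hWV x ha
  rw [hW, hV, inv_inv, ← mul_assoc, (hproj.proj_mul_of_mem_right hWV _ hφa).2]

end HomogeneousGroup.AreProjections

theorem statement6_general {G : Type*} [HomogeneousGroup G]
    (W V : Subgroup G) (h : AreComplementary W V)
    (πW πV : G → G) (hproj : AreProjections W V πW πV)
    (A : Set G) (hA : A ⊆ (W : Set G))
    (φ : G → G) (hφ : ∀ w ∈ A, φ w ∈ V) (L : ℝ) :
    (∀ w ∈ A, ∀ w' ∈ A,
        hnorm (πV ((w' * φ w')⁻¹ * (w * φ w))) ≤ L * hnorm (πW ((w' * φ w')⁻¹ * (w * φ w))))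
      ↔
    (∀ x ∈ {g : G | ∃ w ∈ A, g = w * φ w},
      ∀ w ∈ (fun η => πW (x⁻¹ * η)) '' A,
        hnorm ((πV (x * w))⁻¹ * φ (πW (x * w))) ≤ L * hnorm w) := by
  obtain ⟨-, -, hWV, -⟩ := h
  have hσ : ∀ x, ∀ a ∈ A, πW (x⁻¹ * a) = πW (x⁻¹ * (a * φ a)) := fun x a ha => by
    rw [← mul_assoc, (hproj.proj_mul_of_mem_right hWV _ (hφ a ha)).1]
  constructor
  · rintro H _ ⟨w', hw', rfl⟩ _ ⟨a, ha, rfl⟩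
    beta_reduce
    rw [hproj.translate_projW_inv_mul hWV φ _ (hA ha) (hφ a ha), hσ _ a ha]
    exact H a ha w' hw'
  · intro H a ha w' hw'
    have hle := H _ ⟨w', hw', rfl⟩ (πW ((w' * φ w')⁻¹ * a)) ⟨a, ha, rfl⟩
    rwa [hproj.translate_projW_inv_mul hWV φ _ (hA ha) (hφ a ha), hσ _ a ha] at hle

/-- `φ : A → V` is intrinsic `L`-Lipschitz if and only if for every
`x ∈ graph(φ)` and every `w ∈ A_{x⁻¹}` one has `‖φ_{x⁻¹}(w)‖ ≤ L ‖w‖`, where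
`A_{x⁻¹} = σ_{x⁻¹}(A)` and `φ_{x⁻¹}(w) = (π_V(xw))⁻¹ φ(π_W(xw))`. -/
theorem statement6 {G : Type*} [HomogeneousGroup G]
    (W V : Subgroup G) (h : AreComplementary W V)
    (πW πV : G → G) (hproj : AreProjections W V πW πV)
    (A : Set G) (hA : A ⊆ (W : Set G))
    (φ : G → G) (hφ : ∀ w ∈ A, φ w ∈ V) (L : ℝ) (hL : 0 ≤ L) :
    (∀ w ∈ A, ∀ w' ∈ A,
        hnorm (πV ((w' * φ w')⁻¹ * (w * φ w))) ≤ L * hnorm (πW ((w' * φ w')⁻¹ * (w * φ w))))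
      ↔
    (∀ x ∈ {g : G | ∃ w ∈ A, g = w * φ w},
      ∀ w ∈ (fun η => πW (x⁻¹ * η)) '' A,
        hnorm ((πV (x * w))⁻¹ * φ (πW (x * w))) ≤ L * hnorm w) :=
  statement6_general W V h πW πV hproj A hA φ hφ L
end

section
/- Every intrinsically linear map L : W → V between complementary homogeneous subgroups of a homogeneous group G is homogeneous: L(δ_t(w)) = δ_t(L(w)) for every w ∈ W and t > 0. -/
open HomogeneousGroup

/-- `L : W → V` is intrinsically linear if its intrinsic graph
`{w · L(w) : w ∈ W}` is a homogeneous subgroup of `G`. -/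
def HomogeneousGroup.IsIntrinsicallyLinear {G : Type*} [HomogeneousGroup G]
    (W V : Subgroup G) (L : G → G) : Prop :=
  (∀ w ∈ W, L w ∈ V) ∧ ∃ H : Subgroup G, IsHomSubgroup H ∧
    (H : Set G) = {g : G | ∃ w ∈ (W : Set G), g = w * L w}

theorem Subgroup.eq_and_eq_of_mul_eq_mul {G : Type*} [Group G] {W V : Subgroup G}
    (hWV : Disjoint W V) {w₁ w₂ v₁ v₂ : G} (hw₁ : w₁ ∈ W) (hw₂ : w₂ ∈ W) (hv₁ : v₁ ∈ V)
    (hv₂ : v₂ ∈ V) (h : w₁ * v₁ = w₂ * v₂) : w₁ = w₂ ∧ v₁ = v₂ := by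
  simpa [Prod.ext_iff] using Subgroup.mul_injective_of_disjoint hWV
    (a₁ := (⟨w₁, hw₁⟩, ⟨v₁, hv₁⟩)) (a₂ := (⟨w₂, hw₂⟩, ⟨v₂, hv₂⟩)) h

theorem eq_of_mul_mem_graph {G : Type*} [Group G] {W V : Subgroup G} (hWV : Disjoint W V)
    {L : G → G} (hLV : ∀ w ∈ W, L w ∈ V) {w v : G} (hw : w ∈ W) (hv : v ∈ V)
    (h : w * v ∈ {g : G | ∃ w ∈ (W : Set G), g = w * L w}) : L w = v := by
  obtain ⟨w', hw', hwv⟩ := h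
  obtain ⟨rfl, rfl⟩ := Subgroup.eq_and_eq_of_mul_eq_mul hWV hw hw' hv (hLV w' hw') hwv
  rfl

/-- Every intrinsically linear map `L : W → V` between complementary
homogeneous subgroups is homogeneous: `L(δ_t w) = δ_t(L w)` for all `w ∈ W`, `t > 0`. -/
theorem statement7 {G : Type*} [HomogeneousGroup G]
    (W V : Subgroup G) (h : AreComplementary W V)
    (L : G → G) (hL : IsIntrinsicallyLinear W V L) :
    ∀ w ∈ W, ∀ t : ℝ, 0 < t → L (dil t w) = dil t (L w) := by
  intro w hw t ht
  obtain ⟨hLV, H, ⟨-, hH_dil⟩, hH⟩ := hL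
  obtain ⟨⟨-, hW_dil⟩, ⟨-, hV_dil⟩, hWV, -⟩ := h
  have hgraph : w * L w ∈ H := by
    rw [← SetLike.mem_coe, hH]
    exact ⟨w, hw, rfl⟩
  have hdil_graph := hH_dil t ht _ hgraph
  rw [dil_mul ht, ← SetLike.mem_coe, hH] at hdil_graph
  exact eq_of_mul_mem_graph (disjoint_iff.mpr hWV) hLV (hW_dil t ht w hw)
    (hV_dil t ht _ (hLV w hw)) hdil_graph
end

section
/- Let (W,V) be complementary homogeneous subgroups of a homogeneous group G and let L : W → V be intrinsically linear. Then (graph(L), V) is a couple of complementary subgroups of G, i.e. graph(L) ∩ V = {0} and G = graph(L)·V. -/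
open HomogeneousGroup

/-! The graph of `L` meets `V` only where `w * L w ∈ V`, which forces `w ∈ W ∩ V = {1}`; and a
factorization `x = w * v` through `(W, V)` becomes `x = (w * L w) * ((L w)⁻¹ * v)` through
`(graph L, V)`. -/

section IntrinsicGraph

variable {G : Type*} [Group G] {W V H : Subgroup G} {L : G → G}

def intrinsicGraph (W : Subgroup G) (L : G → G) : Set G :=
  {g : G | ∃ w ∈ (W : Set G), g = w * L w}

theorem Subgroup.eq_one_of_mul_mem_of_inf_eq_bot (hWV : W ⊓ V = ⊥) {w v : G} (hw : w ∈ W)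
    (hv : v ∈ V) (hwv : w * v ∈ V) : w = 1 := by
  have hwV : w ∈ V := by simpa using V.mul_mem hwv (V.inv_mem hv)
  exact Subgroup.disjoint_def.mp (disjoint_iff.mpr hWV) hw hwV

theorem inf_eq_bot_of_coe_eq_intrinsicGraph (hWV : W ⊓ V = ⊥) (hLV : ∀ w ∈ W, L w ∈ V)
    (hH : (H : Set G) = intrinsicGraph W L) : H ⊓ V = ⊥ := by
  have eq_L_one_of_mem_inf : ∀ g ∈ H, g ∈ V → g = L 1 := by
    intro g hgH hgV
    obtain ⟨w, hw, rfl⟩ : g ∈ intrinsicGraph W L := hH ▸ hgH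
    obtain rfl := Subgroup.eq_one_of_mul_mem_of_inf_eq_bot hWV hw (hLV w hw) hgV
    exact one_mul _
  have hL1 : L 1 = 1 := (eq_L_one_of_mem_inf 1 H.one_mem V.one_mem).symm
  refine disjoint_iff.mp (Subgroup.disjoint_def.mpr fun hgH hgV => ?_)
  rw [eq_L_one_of_mem_inf _ hgH hgV, hL1]

theorem exists_mul_of_coe_eq_intrinsicGraph (hfact : ∀ x : G, ∃ w ∈ W, ∃ v ∈ V, x = w * v)
    (hLV : ∀ w ∈ W, L w ∈ V) (hH : (H : Set G) = intrinsicGraph W L) (x : G) :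
    ∃ h ∈ H, ∃ v ∈ V, x = h * v := by
  obtain ⟨w, hw, v, hv, rfl⟩ := hfact x
  have hgraph : w * L w ∈ H := by
    rw [← SetLike.mem_coe, hH]
    exact ⟨w, hw, rfl⟩
  exact ⟨w * L w, hgraph, (L w)⁻¹ * v, V.mul_mem (V.inv_mem (hLV w hw)) hv, by group⟩

end IntrinsicGraph

/-- If `L : W → V` is intrinsically linear, then `(graph(L), V)` is a
couple of complementary subgroups of `G`: `graph(L) ∩ V = {1}` and `G = graph(L) · V`. -/
theorem statement8 {G : Type*} [HomogeneousGroup G]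
    (W V : Subgroup G) (h : AreComplementary W V)
    (L : G → G) (hL : IsIntrinsicallyLinear W V L) :
    ∀ H : Subgroup G, (H : Set G) = {g : G | ∃ w ∈ (W : Set G), g = w * L w} →
      AreComplementary H V := by
  intro H hH
  obtain ⟨hLV, H', hH'hom, hH'⟩ := hL
  obtain ⟨-, hVhom, hWV, hfact⟩ := h
  obtain rfl : H = H' := SetLike.coe_injective (hH.trans hH'.symm)
  exact ⟨hH'hom, hVhom, inf_eq_bot_of_coe_eq_intrinsicGraph hWV hLV hH,
    exists_mul_of_coe_eq_intrinsicGraph hfact hLV hH⟩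
end

section
/- Let (H,V) be a couple of complementary homogeneous subgroups of a homogeneous group G, where (W,V) is also a couple of complementary subgroups. Then there exists a unique intrinsically linear function L : W → V such that H = graph(L) = {w·L(w) : w ∈ W}. -/
open HomogeneousGroup

namespace Subgroup

variable {G : Type*} [Group G] {W V H : Subgroup G}

theorem eq_of_mul_mem_of_inf_eq_bot (hHV : H ⊓ V = ⊥) {g v v' : G} (hv : v ∈ V) (hv' : v' ∈ V)
    (hgv : g * v ∈ H) (hgv' : g * v' ∈ H) : v = v' := by
  have hmem : v⁻¹ * v' ∈ H ⊓ V := by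
    refine ⟨?_, V.mul_mem (V.inv_mem hv) hv'⟩
    simpa [mul_assoc] using H.mul_mem (H.inv_mem hgv) hgv'
  rwa [hHV, mem_bot, inv_mul_eq_one] at hmem

theorem exists_mul_mem_of_forall_eq_mul (hHV : ∀ x : G, ∃ h ∈ H, ∃ v ∈ V, x = h * v) (x : G) :
    ∃ v ∈ V, x * v ∈ H := by
  obtain ⟨h, hh, v, hv, rfl⟩ := hHV x
  exact ⟨v⁻¹, V.inv_mem hv, by simpa using hh⟩

/-- Since `H ∩ V` is trivial, an element `w * v` of `H` must have `v = L w`. -/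
theorem coe_eq_setOf_mul (hHV : H ⊓ V = ⊥) (hWV : ∀ x ∈ H, ∃ w ∈ W, ∃ v ∈ V, x = w * v)
    {L : G → G} (hLV : ∀ w ∈ W, L w ∈ V) (hLH : ∀ w ∈ W, w * L w ∈ H) :
    (H : Set G) = {g | ∃ w ∈ (W : Set G), g = w * L w} := by
  ext g
  constructor
  · intro hg
    obtain ⟨w, hw, v, hv, rfl⟩ := hWV g hg
    rw [eq_of_mul_mem_of_inf_eq_bot hHV hv (hLV w hw) hg (hLH w hw)]
    exact ⟨w, hw, rfl⟩
  · rintro ⟨w, hw, rfl⟩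
    exact hLH w hw

end Subgroup

/-- If `(H,V)` and `(W,V)` are couples of complementary homogeneous
subgroups, then there is a unique intrinsically linear `L : W → V` with
`H = graph(L) = {w · L(w) : w ∈ W}`. -/
theorem statement9 {G : Type*} [HomogeneousGroup G]
    (W V H : Subgroup G) (hWV : AreComplementary W V) (hHV : AreComplementary H V) :
    ∃ L : G → G, IsIntrinsicallyLinear W V L ∧
      (H : Set G) = {g : G | ∃ w ∈ (W : Set G), g = w * L w} ∧
      ∀ L' : G → G, IsIntrinsicallyLinear W V L' →
        (H : Set G) = {g : G | ∃ w ∈ (W : Set G), g = w * L' w} →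
        ∀ w ∈ W, L' w = L w := by
  obtain ⟨hHhom, -, hHVbot, hHVdec⟩ := hHV
  choose L hLV hLH using Subgroup.exists_mul_mem_of_forall_eq_mul hHVdec
  have hgraph : (H : Set G) = {g : G | ∃ w ∈ (W : Set G), g = w * L w} :=
    Subgroup.coe_eq_setOf_mul hHVbot (fun x _ => hWV.2.2.2 x) (fun w _ => hLV w)
      (fun w _ => hLH w)
  refine ⟨L, ⟨fun w _ => hLV w, H, hHhom, hgraph⟩, hgraph, fun L' hL' hgraph' w hw => ?_⟩
  have hwL' : w * L' w ∈ H := by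
    rw [← SetLike.mem_coe, hgraph']
    exact ⟨w, hw, rfl⟩
  exact Subgroup.eq_of_mul_mem_of_inf_eq_bot hHVbot (hL'.1 w hw) (hLV w) hwL' (hLH w)
end

section
/- Let M ∈ ℝ^{q×(q−p)} be a block matrix of the form having top block [∇; I_{n₁−p}] with ∇ ∈ ℝ^{p×(n₁−p)}, followed below by blocks forming a lower block-triangular structure with identity diagonal blocks I_{n₂},…,I_{n_ι} and zero blocks above them (as in equation (7.4) of the paper). If S is a (q−p)×(q−p) submatrix of M obtained by deleting p rows and det(S) ≠ 0, then all p deleted rows have indices ≤ n₁. Consequently, the Euclidean Jacobian √(det(MᵀM)) of M equals the Jacobian of the n₁×(n₁−p) matrix [∇; I_{n₁−p}]. -/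
open Matrix

/-!
The columns of the lower layers vanish on the first `n₁` rows. So in a nonzero term of the
Leibniz expansion of `det S` these columns are matched injectively with lower rows, and since
there are as many lower rows as lower columns, every lower row is kept.

For the Jacobian, write `M = [A 0; B L]` with `A = [∇; I]` and `L` unit lower triangular (the
layers are sorted). Then `M = diag(A, I) · [I 0; B L]`, so
`det (Mᵀ M) = det (Aᵀ A) · det L ^ 2 = det (Aᵀ A)`.
-/

namespace Matrix

variable {R : Type*} [CommRing R]

theorem exists_perm_forall_ne_zero_of_det_ne_zero {n : Type*} [Fintype n] [DecidableEq n]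
    {S : Matrix n n R} (hS : S.det ≠ 0) : ∃ σ : Equiv.Perm n, ∀ j, S (σ j) j ≠ 0 := by
  rw [det_apply] at hS
  obtain ⟨σ, -, hσ⟩ := Finset.exists_ne_zero_of_sum_ne_zero hS
  exact ⟨σ, fun j hj => hσ (by
    rw [Finset.prod_eq_zero (f := fun i => S (σ i) i) (Finset.mem_univ j) hj, smul_zero])⟩

theorem inr_mem_range_of_det_submatrix_ne_zero {α β γ : Type*} [Fintype β] [Fintype γ]
    [DecidableEq β] [DecidableEq γ] {N : Matrix (α ⊕ β) (γ ⊕ β) R} (hN : N.toBlocks₁₂ = 0)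
    {ρ : γ ⊕ β → α ⊕ β} (hρ : Function.Injective ρ) (hdet : (N.submatrix ρ id).det ≠ 0)
    (b : β) : Sum.inr b ∈ Set.range ρ := by
  obtain ⟨σ, hσ⟩ := exists_perm_forall_ne_zero_of_det_ne_zero hdet
  have hlower : ∀ j : β, ∃ i : β, ρ (σ (Sum.inr j)) = Sum.inr i := by
    intro j
    rcases h : ρ (σ (Sum.inr j)) with a | i
    · have hzero : N (Sum.inl a) (Sum.inr j) = 0 := congr_fun₂ hN a j
      exact absurd (by simpa [h] using hzero) (hσ (Sum.inr j))
    · exact ⟨i, rfl⟩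
  choose f hf using hlower
  have hf_inj : Function.Injective f := fun j j' h =>
    Sum.inr_injective <| σ.injective <| hρ <| by rw [hf, hf, h]
  obtain ⟨j, rfl⟩ := Finite.injective_iff_surjective.mp hf_inj b
  exact ⟨σ (Sum.inr j), hf j⟩

theorem det_transpose_mul_self_fromBlocks_zero₁₂ {l n m : Type*} [Fintype l] [Fintype n]
    [Fintype m] [DecidableEq n] [DecidableEq m]
    (A : Matrix l n R) (B : Matrix m n R) (D : Matrix m m R) :
    ((fromBlocks A 0 B D)ᵀ * fromBlocks A 0 B D).det = (Aᵀ * A).det * D.det ^ 2 := by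
  set P : Matrix (l ⊕ m) (n ⊕ m) R := fromBlocks A 0 0 1
  set V : Matrix (n ⊕ m) (n ⊕ m) R := fromBlocks 1 0 B D
  have hfactor : fromBlocks A 0 B D = P * V := by simp [P, V, fromBlocks_multiply]
  have hgram : Pᵀ * P = fromBlocks (Aᵀ * A) 0 0 1 := by
    simp [P, fromBlocks_transpose, fromBlocks_multiply]
  rw [hfactor, transpose_mul, Matrix.mul_assoc, ← Matrix.mul_assoc Pᵀ, hgram,
    det_mul, det_mul, det_transpose, det_fromBlocks_zero₁₂, det_fromBlocks_zero₁₂, det_one,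
    det_one, one_mul, mul_one]
  ring

end Matrix

theorem statement16_general (p c m : ℕ)
    (M : Matrix ((Fin p ⊕ Fin c) ⊕ Fin m) (Fin c ⊕ Fin m) ℝ)
    (ℓ : Fin m → ℕ) (hℓmono : Monotone ℓ)
    -- the `∇`-rows vanish outside the layer-0 columns
    (htop : ∀ (i : Fin p) (j : Fin m), M (Sum.inl (Sum.inl i)) (Sum.inr j) = 0)
    -- identity rows of the first layer
    (hid1' : ∀ (i : Fin c) (j : Fin m), M (Sum.inl (Sum.inr i)) (Sum.inr j) = 0)
    -- lower rows: identity in their own layer, zero in higher layers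
    (hlow : ∀ i j : Fin m, ℓ i ≤ ℓ j →
      M (Sum.inr i) (Sum.inr j) = if i = j then 1 else 0) :
    (∀ ρ : Fin c ⊕ Fin m → (Fin p ⊕ Fin c) ⊕ Fin m, Function.Injective ρ →
        (M.submatrix ρ id).det ≠ 0 → ∀ i : Fin m, Sum.inr i ∈ Set.range ρ) ∧
      Real.sqrt (Mᵀ * M).det =
        Real.sqrt ((M.submatrix Sum.inl Sum.inl)ᵀ * M.submatrix Sum.inl Sum.inl).det := by
  have hZ : M.toBlocks₁₂ = 0 := by
    ext (i | i) j
    exacts [htop i j, hid1' i j]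
  have hL : M.toBlocks₂₂.IsLowerTriangular := fun i j (hij : i < j) => by
    simp [toBlocks₂₂, hlow i j (hℓmono hij.le), hij.ne]
  have hdetL : M.toBlocks₂₂.det = 1 := by
    rw [det_of_isLowerTriangular _ hL]
    exact Finset.prod_eq_one fun i _ => by simp [toBlocks₂₂, hlow i i le_rfl]
  have hgram : (Mᵀ * M).det = (M.toBlocks₁₁ᵀ * M.toBlocks₁₁).det := by
    conv_lhs => rw [← fromBlocks_toBlocks M]
    rw [hZ, det_transpose_mul_self_fromBlocks_zero₁₂, hdetL, one_pow,
      mul_one]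
  exact ⟨fun ρ hρ hdet => inr_mem_range_of_det_submatrix_ne_zero hZ hρ hdet, by rw [hgram]; rfl⟩

/-- Let `M` be a `q × (q−p)` real matrix with the block structure of
equation (7.4) of the paper: rows are indexed by `(Fin p ⊕ Fin c) ⊕ Fin m` (the first
`p` rows carry `∇`, the next `c = n₁ − p` rows the identity `I_c`, and the remaining
`m` rows are distributed in layers `ℓ i ≥ 1`), columns by `Fin c ⊕ Fin m`; rows of
layer `s` have arbitrary entries in columns of lower layers, identity entries in their
own layer and zeros in columns of higher layers, while the first `p` rows vanish
outside the layer-0 columns. Then every `(q−p) × (q−p)` submatrix `S` obtained by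
deleting `p` rows with `det S ≠ 0` keeps all the rows of index `≥ n₁ = p + c`
(i.e. all deleted rows have indices ≤ n₁), and the Euclidean Jacobian
`√(det (Mᵀ M))` of `M` equals the Jacobian of the top `n₁ × (n₁ − p)` block `[∇; I_c]`. -/
theorem statement16 (p c m : ℕ)
    (M : Matrix ((Fin p ⊕ Fin c) ⊕ Fin m) (Fin c ⊕ Fin m) ℝ)
    (ℓ : Fin m → ℕ) (hℓ : ∀ i, 1 ≤ ℓ i) (hℓmono : Monotone ℓ)
    -- the `∇`-rows vanish outside the layer-0 columns
    (htop : ∀ (i : Fin p) (j : Fin m), M (Sum.inl (Sum.inl i)) (Sum.inr j) = 0)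
    -- identity rows of the first layer
    (hid1 : ∀ i j : Fin c, M (Sum.inl (Sum.inr i)) (Sum.inl j) = if i = j then 1 else 0)
    (hid1' : ∀ (i : Fin c) (j : Fin m), M (Sum.inl (Sum.inr i)) (Sum.inr j) = 0)
    -- lower rows: identity in their own layer, zero in higher layers
    (hlow : ∀ i j : Fin m, ℓ i ≤ ℓ j →
      M (Sum.inr i) (Sum.inr j) = if i = j then 1 else 0) :
    (∀ ρ : Fin c ⊕ Fin m → (Fin p ⊕ Fin c) ⊕ Fin m, Function.Injective ρ →
        (M.submatrix ρ id).det ≠ 0 → ∀ i : Fin m, Sum.inr i ∈ Set.range ρ) ∧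
      Real.sqrt (Mᵀ * M).det =
        Real.sqrt ((M.submatrix Sum.inl Sum.inl)ᵀ * M.submatrix Sum.inl Sum.inl).det :=
  statement16_general p c m M ℓ hℓmono htop hid1' hlow
end

section
/- Let G be a stratified group identified with ℝ^q via a graded orthonormal basis, M a stratified group of topological dimension p, Ω ⊂ G open, f ∈ C¹_h(Ω,M), and x ∈ Ω. Fix an orthonormal basis (b₁,…,b_p) of M and let R^i_H f(x) ∈ G represent the linear functional b_i* ∘ Df(x) via the scalar product, and R^i_V f(x) ∈ V represent b_i* ∘ Df(x)|_V for a p-dimensional homogeneous subgroup V. If U = ker Df(x) is complementary to V, 𝐕 = v₁∧⋯∧v_p for an orthonormal basis of V, and 𝐔 is a unit orienting (q−p)-vector of U, then |𝐕 ∧ 𝐔| = |R¹_V f(x) ∧ ⋯ ∧ R^p_V f(x)| / |R¹_H f(x) ∧ ⋯ ∧ R^p_H f(x)| = J_V f(x) / J_H f(x). -/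
/-
Put `W = (ker F)ᗮ` and fix an orthonormal basis `w` of `W`. Every `R^i_H` is orthogonal to
`ker F`, so lies in `W`, and `R^i_V` is the orthogonal projection of `R^i_H` to `V`. Hence, with
`B = (⟪w k, v i⟫)` and `C = (⟪w k, R^i_H⟫)`, all three Gram determinants are squares of
coordinate determinants: `|R_H| = |det C|`, `|R_V| = |det (Bᵀ C)|`, and
`|𝐕 ∧ 𝐔| = |det B|` because in the orthonormal basis `(w, u)` of `G` the coordinates of
`(v, u)` form a block triangular matrix with diagonal blocks `B` and `1`. Surjectivity of `F`
makes the `R^i_H` linearly independent, so `det C ≠ 0`.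
-/

open scoped RealInnerProductSpace

noncomputable section

/-- The data of a homogeneous group structure on a graded vector space `G`, identified
with its Lie algebra via `exp`: group product (given by the BCH formula), inverse,
dilations and a homogeneous norm. The identity element is `0`. -/
structure GroupData (G : Type*) [NormedAddCommGroup G] [InnerProductSpace ℝ G] where
  mul : G → G → G
  inv : G → G
  mul_assoc' : ∀ x y z, mul (mul x y) z = mul x (mul y z)
  zero_mul' : ∀ x, mul 0 x = x
  mul_zero' : ∀ x, mul x 0 = x
  inv_mul' : ∀ x, mul (inv x) x = 0
  dil : ℝ → G → G
  dil_mul : ∀ t : ℝ, 0 < t → ∀ x y, dil t (mul x y) = mul (dil t x) (dil t y)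
  hnorm : G → ℝ
  hnorm_zero : hnorm 0 = 0
  hnorm_pos : ∀ x, x ≠ 0 → 0 < hnorm x
  hnorm_dil : ∀ t : ℝ, 0 < t → ∀ x, hnorm (dil t x) = t * hnorm x

namespace GroupData

variable {G : Type*} [NormedAddCommGroup G] [InnerProductSpace ℝ G]

/-- A homogeneous subgroup of `G`: a linear subspace which is a subgroup closed
under dilations. -/
def IsHomSubgroup (D : GroupData G) (S : Submodule ℝ G) : Prop :=
  (∀ x ∈ S, ∀ y ∈ S, D.mul x y ∈ S) ∧ (∀ x ∈ S, D.inv x ∈ S) ∧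
    ∀ t : ℝ, 0 < t → ∀ x ∈ S, D.dil t x ∈ S

/-- `(W,V)` is a couple of complementary homogeneous subgroups. -/
def AreComplementary (D : GroupData G) (W V : Submodule ℝ G) : Prop :=
  D.IsHomSubgroup W ∧ D.IsHomSubgroup V ∧ W ⊓ V = ⊥ ∧
    ∀ x : G, ∃ w ∈ W, ∃ v ∈ V, x = D.mul w v

/-- The group projections of the factorization `x = π_W(x) · π_V(x)`. -/
def AreProjections (D : GroupData G) (W V : Submodule ℝ G) (πW πV : G → G) : Prop :=
  ∀ x : G, πW x ∈ W ∧ πV x ∈ V ∧ x = D.mul (πW x) (πV x)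

end GroupData

/-- The norm `|f 0 ∧ ⋯ ∧ f (m-1)|` of the wedge product of a family of vectors,
computed as the square root of the Gram determinant. -/
def gramNorm {G : Type*} [NormedAddCommGroup G] [InnerProductSpace ℝ G]
    {m : ℕ} (f : Fin m → G) : ℝ :=
  Real.sqrt (Matrix.det (Matrix.of fun i j : Fin m => ⟪f i, f j⟫))

/-- `f` is an orthonormal basis (as an indexed family) of the subspace `S`. -/
def IsONBasisOf {G : Type*} [NormedAddCommGroup G] [InnerProductSpace ℝ G]
    {m : ℕ} (f : Fin m → G) (S : Submodule ℝ G) : Prop :=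
  (∀ i j, ⟪f i, f j⟫ = if i = j then (1 : ℝ) else 0) ∧
    Submodule.span ℝ (Set.range f) = S

open GroupData

open scoped Matrix

namespace Orthonormal

variable {E : Type*} [NormedAddCommGroup E] [InnerProductSpace ℝ E] {ι : Type*} {e : ι → E}

theorem inner_eq_sum_of_mem_span [Fintype ι] (he : Orthonormal ℝ e) {x : E}
    (hx : x ∈ Submodule.span ℝ (Set.range e)) (y : E) :
    ⟪x, y⟫ = ∑ k, ⟪e k, x⟫ * ⟪e k, y⟫ := by
  obtain ⟨c, rfl⟩ := (Submodule.mem_span_range_iff_exists_fun ℝ).mp hx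
  simp only [he.inner_right_fintype, sum_inner, real_inner_smul_left]

theorem sumElim {κ : Type*} {u : κ → E} (he : Orthonormal ℝ e) (hu : Orthonormal ℝ u)
    (heu : ∀ k j, ⟪e k, u j⟫ = 0) : Orthonormal ℝ (Sum.elim e u) := by
  classical
  rw [orthonormal_iff_ite] at he hu ⊢
  rintro (k | j) (l | j')
  · simpa using he k l
  · simpa using heu k j'
  · simpa [real_inner_comm] using heu l j
  · simpa using hu j j'

theorem det_gram_eq_sq [Fintype ι] [DecidableEq ι] (he : Orthonormal ℝ e) {f : ι → E}
    (hf : ∀ i, f i ∈ Submodule.span ℝ (Set.range e)) :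
    (Matrix.gram ℝ f).det = (Matrix.of fun k i => ⟪e k, f i⟫).det ^ 2 := by
  have hgram : Matrix.gram ℝ f =
      (Matrix.of fun k i => ⟪e k, f i⟫)ᵀ * (Matrix.of fun k i => ⟪e k, f i⟫) := by
    ext i j
    simp only [Matrix.gram_apply, Matrix.mul_apply, Matrix.transpose_apply, Matrix.of_apply,
      he.inner_eq_sum_of_mem_span (hf i)]
  rw [hgram, Matrix.det_mul, Matrix.det_transpose, sq]

end Orthonormal

section Gram

variable {E : Type*} [NormedAddCommGroup E] [InnerProductSpace ℝ E]

theorem gramNorm_eq_abs_det {m : ℕ} {e f : Fin m → E} (he : Orthonormal ℝ e)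
    (hf : ∀ i, f i ∈ Submodule.span ℝ (Set.range e)) :
    gramNorm f = |(Matrix.of fun k i => ⟪e k, f i⟫).det| := by
  rw [gramNorm, ← Real.sqrt_sq_eq_abs, ← he.det_gram_eq_sq hf]
  rfl

theorem gramNorm_ne_zero {m : ℕ} {f : Fin m → E} (hf : LinearIndependent ℝ f) :
    gramNorm f ≠ 0 :=
  Real.sqrt_ne_zero'.mpr (Matrix.posDef_gram_of_linearIndependent hf).det_pos

theorem gramNorm_append {m n : ℕ} (v : Fin m → E) (u : Fin n → E) :
    gramNorm (Fin.append v u) = √(Matrix.gram ℝ (Sum.elim v u)).det := by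
  rw [gramNorm, ← Matrix.det_submatrix_equiv_self finSumFinEquiv]
  congr 2
  ext (i | j) (k | l) <;> simp

theorem gramNorm_append_eq_abs_det {m n : ℕ} {v w : Fin m → E} {u : Fin n → E}
    (hw : Orthonormal ℝ w) (hu : Orthonormal ℝ u) (hwu : ∀ k j, ⟪w k, u j⟫ = 0)
    (hv : ∀ i, v i ∈ Submodule.span ℝ (Set.range w) ⊔ Submodule.span ℝ (Set.range u)) :
    gramNorm (Fin.append v u) = |(Matrix.of fun k i => ⟪w k, v i⟫).det| := by
  have hspan : ∀ a, Sum.elim v u a ∈ Submodule.span ℝ (Set.range (Sum.elim w u)) := by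
    rw [Set.Sum.elim_range, Submodule.span_union]
    rintro (i | j)
    · exact hv i
    · exact Submodule.mem_sup_right (Submodule.subset_span ⟨j, rfl⟩)
  have hblocks : (Matrix.of fun a b => ⟪Sum.elim w u a, Sum.elim v u b⟫) =
      Matrix.fromBlocks (Matrix.of fun k i => ⟪w k, v i⟫) 0
        (Matrix.of fun j i => ⟪u j, v i⟫) 1 := by
    classical
    ext (k | j) (i | l)
    · rfl
    · exact hwu k l
    · rfl
    · simpa [Matrix.one_apply] using orthonormal_iff_ite.mp hu j l
  rw [gramNorm_append, (hw.sumElim hu hwu).det_gram_eq_sq hspan, Real.sqrt_sq_eq_abs, hblocks,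
    Matrix.det_fromBlocks_zero₁₂, Matrix.det_one, mul_one]

end Gram

namespace IsONBasisOf

variable {E : Type*} [NormedAddCommGroup E] [InnerProductSpace ℝ E] {m : ℕ} {f : Fin m → E}
  {S : Submodule ℝ E}

theorem orthonormal (h : IsONBasisOf f S) : Orthonormal ℝ f :=
  orthonormal_iff_ite.mpr h.1

theorem mem (h : IsONBasisOf f S) (i : Fin m) : f i ∈ S :=
  h.2 ▸ Submodule.subset_span ⟨i, rfl⟩

end IsONBasisOf

theorem Submodule.exists_orthonormal_span_eq {E : Type*} [NormedAddCommGroup E]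
    [InnerProductSpace ℝ E] (K : Submodule ℝ E) [FiniteDimensional ℝ K] {n : ℕ}
    (hK : Module.finrank ℝ K = n) :
    ∃ w : Fin n → E, Orthonormal ℝ w ∧ Submodule.span ℝ (Set.range w) = K := by
  let w₀ := (stdOrthonormalBasis ℝ K).reindex (finCongr hK)
  refine ⟨K.subtype ∘ w₀, w₀.orthonormal.comp_linearIsometry K.subtypeₗᵢ, ?_⟩
  rw [Set.range_comp, Submodule.span_image, ← w₀.coe_toBasis, w₀.toBasis.span_eq,
    Submodule.map_subtype_top]

section Representation

variable {E M : Type*} [NormedAddCommGroup E] [InnerProductSpace ℝ E]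
  [NormedAddCommGroup M] [InnerProductSpace ℝ M] (F : E →ₗ[ℝ] M)

theorem finrank_orthogonal_ker [FiniteDimensional ℝ E] [FiniteDimensional ℝ M]
    (hF : Function.Surjective F) :
    Module.finrank ℝ (LinearMap.ker F)ᗮ = Module.finrank ℝ M := by
  have hrank := LinearMap.finrank_range_add_finrank_ker F
  have horth := (LinearMap.ker F).finrank_add_finrank_orthogonal
  rw [LinearMap.range_eq_top.mpr hF, finrank_top] at hrank
  omega

variable {F}

theorem mem_orthogonal_ker_of_inner_eq {r : E} {m : M} (hr : ∀ y, ⟪r, y⟫ = ⟪m, F y⟫) :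
    r ∈ (LinearMap.ker F)ᗮ := by
  intro u hu
  rw [real_inner_comm, hr, LinearMap.mem_ker.mp hu, inner_zero_right]

theorem linearIndependent_of_inner_eq {ι : Type*} [Fintype ι] (hF : Function.Surjective F)
    (b : OrthonormalBasis ι ℝ M) {R : ι → E} (hR : ∀ i y, ⟪R i, y⟫ = ⟪b i, F y⟫) :
    LinearIndependent ℝ R := by
  rw [Fintype.linearIndependent_iff]
  intro g hg
  obtain ⟨y, hy⟩ := hF (∑ i, g i • b i)
  have hzero : ⟪∑ i, g i • b i, F y⟫ = 0 := calc
    _ = ⟪∑ i, g i • R i, y⟫ := by simp only [sum_inner, real_inner_smul_left, hR]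
    _ = 0 := by rw [hg, inner_zero_left]
  rw [hy] at hzero
  exact Fintype.linearIndependent_iff.mp b.orthonormal.linearIndependent g
    (inner_self_eq_zero.mp hzero)

end Representation

theorem statement19_general {G M : Type*}
    [NormedAddCommGroup G] [InnerProductSpace ℝ G] [FiniteDimensional ℝ G]
    [NormedAddCommGroup M] [InnerProductSpace ℝ M] [FiniteDimensional ℝ M]
    (q p : ℕ) (hM : Module.finrank ℝ M = p)
    (F : G →ₗ[ℝ] M) (hFsurj : Function.Surjective F)
    (b : OrthonormalBasis (Fin p) ℝ M)
    -- the representing vectors of the rows `b_i* ∘ F` of the differential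
    (RH : Fin p → G) (hRH : ∀ i, ∀ y : G, ⟪RH i, y⟫ = ⟪b i, F y⟫)
    (V : Submodule ℝ G)
    (RV : Fin p → G) (hRVmem : ∀ i, RV i ∈ V)
    (hRV : ∀ i, ∀ v ∈ V, ⟪RV i, v⟫ = ⟪b i, F v⟫)
    (vb : Fin p → G) (hvb : IsONBasisOf vb V)
    (ub : Fin (q - p) → G) (hub : IsONBasisOf ub (LinearMap.ker F)) :
    gramNorm (Fin.append vb ub) = gramNorm RV / gramNorm RH := by
  obtain ⟨w, hw, hwspan⟩ :=
    (LinearMap.ker F)ᗮ.exists_orthonormal_span_eq ((finrank_orthogonal_ker F hFsurj).trans hM)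
  set B := Matrix.of fun k i => ⟪w k, vb i⟫
  set C := Matrix.of fun k i => ⟪w k, RH i⟫
  have hwW : ∀ k, w k ∈ (LinearMap.ker F)ᗮ :=
    fun k => hwspan ▸ Submodule.subset_span ⟨k, rfl⟩
  have hRHw : ∀ i, RH i ∈ Submodule.span ℝ (Set.range w) :=
    fun i => hwspan ▸ mem_orthogonal_ker_of_inner_eq (hRH i)
  have hH : gramNorm RH = |C.det| := gramNorm_eq_abs_det hw hRHw
  have hVU : gramNorm (Fin.append vb ub) = |B.det| := by
    refine gramNorm_append_eq_abs_det hw hub.orthonormal (fun k j => ?_) (fun i => ?_)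
    · exact Submodule.inner_left_of_mem_orthogonal (hub.mem j) (hwW k)
    · rw [hwspan, hub.2, sup_comm, Submodule.sup_orthogonal_of_hasOrthogonalProjection]
      exact Submodule.mem_top
  have hRVcoord : (Matrix.of fun k i => ⟪vb k, RV i⟫) = Bᵀ * C := by
    ext k i
    rw [Matrix.of_apply, real_inner_comm, hRV i _ (hvb.mem k), ← hRH,
      hw.inner_eq_sum_of_mem_span (hRHw i), Matrix.mul_apply]
    simp only [B, C, Matrix.transpose_apply, Matrix.of_apply, mul_comm]
  have hV : gramNorm RV = |B.det| * |C.det| := by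
    rw [gramNorm_eq_abs_det hvb.orthonormal (fun i => hvb.2 ▸ hRVmem i), hRVcoord,
      Matrix.det_mul, Matrix.det_transpose, abs_mul]
  rw [hVU, hV, ← hH, mul_div_cancel_right₀ _
    (gramNorm_ne_zero (linearIndependent_of_inner_eq hFsurj b hRH))]

/-- Let `F = Df(x) : G → M` be the (surjective) Pansu differential,
`(b_i)` an orthonormal basis of `M`, `R^i_H f(x)` and `R^i_V f(x)` the vectors
representing `b_i* ∘ F` on `G` and on `V`. If `U = ker F` is complementary to `V`,
`𝐕 = v₁ ∧ ⋯ ∧ v_p` for an orthonormal basis of `V` and `𝐔` is a unit orienting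
`(q−p)`-vector of `U`, then
`|𝐕 ∧ 𝐔| = |R¹_V ∧ ⋯ ∧ R^p_V| / |R¹_H ∧ ⋯ ∧ R^p_H| = J_V f(x) / J_H f(x)`. -/
theorem statement19 {G M : Type*}
    [NormedAddCommGroup G] [InnerProductSpace ℝ G] [FiniteDimensional ℝ G]
    [NormedAddCommGroup M] [InnerProductSpace ℝ M] [FiniteDimensional ℝ M]
    (q p : ℕ) (hq : Module.finrank ℝ G = q) (hM : Module.finrank ℝ M = p) (hpq : p ≤ q)
    (F : G →ₗ[ℝ] M) (hFsurj : Function.Surjective F)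
    (b : OrthonormalBasis (Fin p) ℝ M)
    -- the representing vectors of the rows `b_i* ∘ F` of the differential
    (RH : Fin p → G) (hRH : ∀ i, ∀ y : G, ⟪RH i, y⟫ = ⟪b i, F y⟫)
    (V : Submodule ℝ G) (hV : Module.finrank ℝ V = p)
    (RV : Fin p → G) (hRVmem : ∀ i, RV i ∈ V)
    (hRV : ∀ i, ∀ v ∈ V, ⟪RV i, v⟫ = ⟪b i, F v⟫)
    -- `U = ker F` is complementary to `V`
    (hcompl : IsCompl (LinearMap.ker F) V)
    (vb : Fin p → G) (hvb : IsONBasisOf vb V)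
    (ub : Fin (q - p) → G) (hub : IsONBasisOf ub (LinearMap.ker F)) :
    gramNorm (Fin.append vb ub) = gramNorm RV / gramNorm RH :=
  statement19_general q p hM F hFsurj b RH hRH V RV hRVmem hRV vb hvb ub hub
end
end
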